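/- arXiv:2404.17969 — 2 statements merged into one kernel-verified Lean document; each statement's English description precedes it below -/
import Mathlib

section
/- Let w be a nonempty prenecklace, written w = (uav')^k u where uav' is a Lyndon word, u,v' words, a a letter, k ≥ 1. For any letter b, the word wb is a prenecklace if and only if b ≥ a; moreover, wb is a Lyndon word if and only if b > a. -/
open List

variable {α : Type*} [LinearOrder α]

/-- `b` is a border of `w`: a proper prefix of `w` which is also a suffix of `w`. -/
def Border (b w : List α) : Prop := b <+: w ∧ b ≠ w ∧ b <:+ w

/-- `w` is bordered if it has a nonempty border. -/
def Bordered (w : List α) : Prop := ∃ b : List α, b ≠ [] ∧ Border b w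

/-- `w` is unbordered if it has no nonempty border. -/
def Unbordered (w : List α) : Prop := ¬ Bordered w

/-- The lexicographic order on words induced by the order on letters. -/
def Lt (x y : List α) : Prop := List.Lex (· < ·) x y

/-- Lexicographic order w.r.t. the inverse order on letters. -/
def AntiLt (x y : List α) : Prop := List.Lex (fun a b : α => b < a) x y

/-- Lyndon word: nonempty and strictly smaller than `v ++ u` for each
nontrivial factorization `w = u ++ v`. -/
def Lyndon (w : List α) : Prop :=
  w ≠ [] ∧ ∀ u v : List α, u ≠ [] → v ≠ [] → w = u ++ v → Lt w (v ++ u)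

/-- Anti-Lyndon word: Lyndon word w.r.t. the inverse lexicographic order. -/
def AntiLyndon (w : List α) : Prop :=
  w ≠ [] ∧ ∀ u v : List α, u ≠ [] → v ≠ [] → w = u ++ v → AntiLt w (v ++ u)

/-- Inverse Lyndon word: every nonempty proper suffix is lexicographically
smaller than the word itself. -/
def InvLyndon (w : List α) : Prop :=
  w ≠ [] ∧ ∀ s : List α, s <:+ w → s ≠ [] → s ≠ w → Lt s w

/-- `x ≪ y` : `x ≺ y` and `x` is not a proper prefix of `y`. -/
def Ll (x y : List α) : Prop := Lt x y ∧ ¬ (x <+: y ∧ x ≠ y)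

/-- The power `x^k` of a word. -/
def wpow (x : List α) (k : ℕ) : List α := (List.replicate k x).flatten

/-- A nonempty word is primitive if it is not a proper power. -/
def Primitive (w : List α) : Prop :=
  w ≠ [] ∧ ∀ (x : List α) (k : ℕ), w = wpow x k → k = 1

/-- A necklace: a power of a Lyndon word. -/
def Necklace (w : List α) : Prop := ∃ (ℓ : List α) (k : ℕ), Lyndon ℓ ∧ w = wpow ℓ k

/-- A prenecklace: a prefix of a necklace. -/
def Prenecklace (w : List α) : Prop := ∃ v : List α, Necklace v ∧ w <+: v

/-- `L` is the Lyndon factorization of `w`: `w` is the concatenation of the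
elements of `L`, all Lyndon words, in nonincreasing lexicographic order. -/
def IsCFL (L : List (List α)) (w : List α) : Prop :=
  (∀ x ∈ L, Lyndon x) ∧ L.flatten = w ∧ List.Chain' (fun a b => Lt b a ∨ b = a) L

/-- `L` is the Lyndon factorization of `w` w.r.t. the inverse order. -/
def IsCFLin (L : List (List α)) (w : List α) : Prop :=
  (∀ x ∈ L, AntiLyndon x) ∧ L.flatten = w ∧ List.Chain' (fun a b => AntiLt b a ∨ b = a) L

/-- Concatenation `ℓ a ++ ℓ (a+1) ++ ⋯ ++ ℓ b`. -/
def cat (ℓ : ℕ → List α) (a b : ℕ) : List α := ((List.range' a (b + 1 - a)).map ℓ).flatten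

set_option linter.unusedSectionVars false

section DuvalAux

variable {α : Type*} [LinearOrder α]

theorem llt_irrefl {x : List α} (h : Lt x x) : False :=
  irrefl_of (List.Lex (fun a b : α => a < b)) x h

theorem llt_trans {x y z : List α} (h1 : Lt x y) (h2 : Lt y z) : Lt x z :=
  List.lex_trans lt_trans h1 h2

theorem llt_asymm {x y : List α} (h1 : Lt x y) (h2 : Lt y x) : False :=
  llt_irrefl (llt_trans h1 h2)

theorem lt_mid (q : List α) {c d : α} (h : c < d) (x y : List α) :
    Lt (q ++ c :: x) (q ++ d :: y) :=
  List.Lex.append_left _ (List.Lex.rel h) q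

theorem lt_cancel_left : ∀ (p : List α) {x y : List α}, Lt (p ++ x) (p ++ y) → Lt x y
  | [], _, _, h => h
  | a :: p, x, y, h => by
    cases h with
    | cons h => exact lt_cancel_left p h
    | rel h => exact absurd h (lt_irrefl a)

theorem lt_decomp {x y : List α} (h : Lt x y) :
    (x <+: y ∧ x ≠ y) ∨ ∃ p c d x' y', c < d ∧ x = p ++ c :: x' ∧ y = p ++ d :: y' := by
  induction h with
  | nil => exact Or.inl ⟨List.nil_prefix, by simp⟩
  | @rel a l₁ b l₂ h => exact Or.inr ⟨[], a, b, l₁, l₂, h, rfl, rfl⟩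
  | @cons a l₁ l₂ h ih =>
    rcases ih with ⟨hp, hne⟩ | ⟨p, c, d, x', y', hcd, rfl, rfl⟩
    · exact Or.inl ⟨List.cons_prefix_cons.mpr ⟨rfl, hp⟩, by simpa using hne⟩
    · exact Or.inr ⟨a :: p, c, d, x', y', hcd, rfl, rfl⟩

theorem lt_of_proper_prefix {x y : List α} (h : x <+: y) (hne : x ≠ y) : Lt x y := by
  obtain ⟨t, rfl⟩ := h
  have ht : t ≠ [] := by rintro rfl; simp at hne
  obtain ⟨c, t, rfl⟩ := List.exists_cons_of_ne_nil ht
  have := List.Lex.append_left (· < ·) (List.Lex.nil (a := c) (l := t)) x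
  simpa only [Lt, List.append_nil] using this

theorem lt_append_of_lt_length {x t : List α} (h : Lt x t) (hlen : t.length ≤ x.length)
    (s s' : List α) : Lt (x ++ s) (t ++ s') := by
  rcases lt_decomp h with ⟨hp, hne⟩ | ⟨q, c, d, x', t', hcd, rfl, rfl⟩
  · exact absurd (hp.eq_of_length (le_antisymm hp.length_le hlen)) hne
  · simpa [List.append_assoc] using lt_mid q hcd (x' ++ s) (t' ++ s')

theorem prefix_cons_extract {s q : List α} {d : α} {p y' : List α}
    (hq : s ++ p = q ++ d :: y') (hlt : q.length < s.length) : ∃ s₃, s = q ++ d :: s₃ := by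
  have h1 : q <+: s := by
    apply List.prefix_of_prefix_length_le _ (List.prefix_append s p) (le_of_lt hlt)
    rw [hq]; exact List.prefix_append _ _
  obtain ⟨s₂, rfl⟩ := h1
  have h2 : s₂ ++ p = d :: y' := by
    apply List.append_cancel_left (as := q); simpa [List.append_assoc] using hq
  match s₂, h2 with
  | [], h2 => simp at hlt
  | e :: s₃, h2 =>
    have : e = d := by simpa using congrArg (·.head?) h2
    exact ⟨s₃, by rw [this]⟩

theorem suffix_append_cases {s x y : List α} (h : s <:+ x ++ y) :
    s <:+ y ∨ ∃ t, t <:+ x ∧ t ≠ [] ∧ s = t ++ y := by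
  obtain ⟨p, hp⟩ := h
  rcases le_or_gt x.length p.length with hle | hlt
  · left
    have hx : x <+: p := by
      apply List.prefix_of_prefix_length_le _ (List.prefix_append p s) hle
      rw [hp]; exact List.prefix_append _ _
    obtain ⟨p₂, rfl⟩ := hx
    exact ⟨p₂, List.append_cancel_left (as := x) (by simpa [List.append_assoc] using hp)⟩
  · right
    have hx : p <+: x := by
      apply List.prefix_of_prefix_length_le (List.prefix_append p s) _ (le_of_lt hlt)
      rw [hp]; exact List.prefix_append _ _
    obtain ⟨t, rfl⟩ := hx
    refine ⟨t, ⟨p, rfl⟩, ?_, List.append_cancel_left (as := p) (by simpa [List.append_assoc] using hp)⟩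
    rintro rfl; simp at hlt

theorem wpow_zero (x : List α) : wpow x 0 = [] := rfl

theorem wpow_succ (x : List α) (k : ℕ) : wpow x (k + 1) = x ++ wpow x k := by
  simp [wpow, List.replicate_succ]

theorem wpow_one (x : List α) : wpow x 1 = x := by simp [wpow]

theorem wpow_add (x : List α) (j m : ℕ) : wpow x (j + m) = wpow x j ++ wpow x m := by
  induction j with
  | zero => rw [Nat.zero_add, wpow_zero, List.nil_append]
  | succ j ih => rw [Nat.succ_add, wpow_succ, wpow_succ, ih, List.append_assoc]

theorem wpow_prefix (x : List α) {j j' : ℕ} (h : j ≤ j') : wpow x j <+: wpow x j' := by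
  obtain ⟨m, rfl⟩ := Nat.exists_eq_add_of_le h
  rw [wpow_add]; exact List.prefix_append _ _

theorem wpow_length (x : List α) (k : ℕ) : (wpow x k).length = k * x.length := by
  induction k with
  | zero => rw [Nat.zero_mul]; rfl
  | succ k ih => rw [wpow_succ, List.length_append, ih]; ring

end DuvalAux

section DuvalLyndon

variable {α : Type*} [LinearOrder α]

/-- Compare two words with equal lengths after appending suffixes. -/
theorem lt_or_eq_of_lt_append {p t s s' : List α} (h : Lt (p ++ s) (t ++ s'))
    (hlen : p.length = t.length) : Lt p t ∨ p = t := by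
  rcases lt_decomp h with ⟨hp, _⟩ | ⟨q, c, d, x', y', hcd, hx, hy⟩
  · right
    have h1 : p <+: t ++ s' := (List.prefix_append p s).trans hp
    exact (List.prefix_of_prefix_length_le h1 (List.prefix_append t s')
      (le_of_eq hlen)).eq_of_length hlen
  · rcases lt_or_ge q.length p.length with hq | hq
    · obtain ⟨p₃, rfl⟩ := prefix_cons_extract hx hq
      obtain ⟨t₃, rfl⟩ := prefix_cons_extract hy (by omega)
      exact Or.inl (lt_mid q hcd p₃ t₃)
    · right
      have hpq : p <+: q := List.prefix_of_prefix_length_le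
        (hx ▸ List.prefix_append p s) (List.prefix_append q (c :: x')) hq
      have htq : t <+: q := List.prefix_of_prefix_length_le
        (hy ▸ List.prefix_append t s') (List.prefix_append q (d :: y')) (by omega)
      exact (List.prefix_of_prefix_length_le hpq htq (le_of_eq hlen)).eq_of_length hlen

theorem lyndon_unbordered {w : List α} (h : Lyndon w) : Unbordered w := by
  rintro ⟨d, hdne, hdp, hdnw, hds⟩
  obtain ⟨t, ht⟩ := hdp
  obtain ⟨p, hp⟩ := hds
  have htne : t ≠ [] := by rintro rfl; exact hdnw (by simpa using ht)
  have hpne : p ≠ [] := by rintro rfl; exact hdnw (by simpa using hp)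
  have h1 : Lt w (t ++ d) := h.2 d t hdne htne ht.symm
  have h2 : Lt w (d ++ p) := h.2 p d hpne hdne hp.symm
  rw [← hp] at h1
  rw [← ht] at h2
  have hlen : p.length = t.length := by
    have h0 := congrArg List.length (ht.trans hp.symm)
    simp at h0
    omega
  have h3 : Lt t p := lt_cancel_left d h2
  rcases lt_or_eq_of_lt_append h1 hlen with h4 | rfl
  · exact llt_asymm h3 h4
  · exact llt_irrefl h3

theorem lyndon_lt_suffix {w s : List α} (h : Lyndon w) (hs : s <:+ w) (hne : s ≠ [])
    (hnw : s ≠ w) : Lt w s := by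
  obtain ⟨p, hp⟩ := hs
  have hpne : p ≠ [] := by rintro rfl; exact hnw (by simpa using hp)
  have h1 : Lt w (s ++ p) := h.2 p s hpne hne hp.symm
  rcases lt_decomp h1 with ⟨hpre, hne2⟩ | ⟨q, c, d, x', y', hcd, hx, hy⟩
  · exfalso
    apply hne2
    apply hpre.eq_of_length
    have h0 := congrArg List.length hp
    simp at h0 ⊢
    omega
  · rcases lt_or_ge q.length s.length with hq | hq
    · obtain ⟨s₃, rfl⟩ := prefix_cons_extract hy hq
      rw [hx]; exact lt_mid q hcd x' s₃
    · exfalso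
      apply lyndon_unbordered h
      refine ⟨s, hne, ?_, hnw, ⟨p, hp⟩⟩
      have hsq : s <+: q := List.prefix_of_prefix_length_le
        (hy ▸ List.prefix_append s p) (List.prefix_append q (d :: y')) hq
      exact hsq.trans (hx.symm ▸ List.prefix_append q (c :: x'))

theorem lyndon_of_lt_suffix {w : List α} (hne : w ≠ [])
    (h : ∀ s, s <:+ w → s ≠ [] → s ≠ w → Lt w s) : Lyndon w := by
  refine ⟨hne, ?_⟩
  intro p s hp hs hw
  have hsw : s ≠ w := by
    rintro rfl
    exact hp (List.self_eq_append_left.mp hw)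
  have h1 : Lt w s := h s ⟨p, hw.symm⟩ hs hsw
  rcases lt_decomp h1 with ⟨hpre, hne2⟩ | ⟨q, c, d, x', y', hcd, hx, hy⟩
  · exfalso
    have h2 : s.length < w.length := by
      have h0 := congrArg List.length hw
      have h3 : 0 < p.length := List.length_pos_iff.mpr hp
      simp at h0
      omega
    have := hpre.length_le
    omega
  · rw [hx, hy, List.append_assoc]
    exact lt_mid q hcd x' (y' ++ p)

theorem lyndon_append {x y : List α} (hx : Lyndon x) (hy : Lyndon y) (hxy : Lt x y) :
    Lyndon (x ++ y) := by
  have key : Lt (x ++ y) y := by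
    rcases lt_decomp hxy with ⟨hpre, hne⟩ | ⟨q, c, d, x', y', hcd, hx', hy'⟩
    · obtain ⟨z, rfl⟩ := hpre
      have hzne : z ≠ [] := by rintro rfl; exact hne (by simp)
      have h1 : Lt (x ++ z) z :=
        lyndon_lt_suffix hy ⟨x, rfl⟩ hzne
          (by intro he; exact hx.1 (List.self_eq_append_left.mp he))
      exact List.Lex.append_left _ h1 x
    · rw [hx', hy', List.append_assoc]
      exact lt_mid q hcd (x' ++ (q ++ d :: y')) y'
  apply lyndon_of_lt_suffix (by simp [hx.1])
  intro s hs hsne hsnw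
  rcases suffix_append_cases hs with hsy | ⟨t, ht, htne, rfl⟩
  · rcases eq_or_ne s y with rfl | hne
    · exact key
    · exact llt_trans key (lyndon_lt_suffix hy hsy hsne hne)
  · have htnx : t ≠ x := by rintro rfl; exact hsnw rfl
    have h1 : Lt x t := lyndon_lt_suffix hx ht htne htnx
    exact lt_append_of_lt_length h1 (List.IsSuffix.length_le ht) y y

theorem lyndon_inc {u v' : List α} {a b : α} (hL : Lyndon (u ++ a :: v')) (hab : a < b) :
    Lyndon (u ++ [b]) := by
  have core : ∀ t : List α, t <:+ u → t ≠ u → Lt (u ++ [b]) (t ++ [b]) := by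
    intro t ht htu
    obtain ⟨p, hp⟩ := ht
    have htlen : t.length < u.length := by
      rcases lt_or_eq_of_le (List.IsSuffix.length_le ⟨p, hp⟩) with h | h
      · exact h
      · exact absurd (List.IsSuffix.eq_of_length_le ⟨p, hp⟩ (le_of_eq h.symm)) htu
    have hsuf : (t ++ a :: v') <:+ (u ++ a :: v') := ⟨p, by rw [← List.append_assoc, hp]⟩
    have hlt : Lt (u ++ a :: v') (t ++ a :: v') := by
      apply lyndon_lt_suffix hL hsuf (by simp)
      intro he
      have h0 := congrArg List.length he
      simp at h0
      omega
    rcases lt_decomp hlt with ⟨hpre, hne⟩ | ⟨q, c, d, x', y', hcd, hx, hy⟩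
    · exfalso
      have h0 := hpre.length_le
      simp at h0
      omega
    · rcases lt_or_ge q.length t.length with hq | hq
      · obtain ⟨t₃, rfl⟩ := prefix_cons_extract hy hq
        obtain ⟨u₃, rfl⟩ := prefix_cons_extract hx (by omega)
        simpa [List.append_assoc] using lt_mid q hcd (u₃ ++ [b]) (t₃ ++ [b])
      · -- t is a prefix of u
        have htpre : t <+: u := by
          have h1 : t <+: q := List.prefix_of_prefix_length_le
            (hy ▸ List.prefix_append t (a :: v')) (List.prefix_append q (d :: y')) hq
          have h2 : t <+: u ++ a :: v' := h1.trans (hx.symm ▸ List.prefix_append q (c :: x'))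
          exact List.prefix_of_prefix_length_le h2 (List.prefix_append _ _) (le_of_lt htlen)
        obtain ⟨u₂, rfl⟩ := htpre
        match u₂ with
        | [] => simp at htlen
        | e :: u₃ =>
          have hea : e ≤ a := by
            have h1 : Lt (e :: (u₃ ++ a :: v')) (a :: v') := by
              apply lt_cancel_left t
              simpa [List.append_assoc] using hlt
            cases h1 with
            | cons _ => exact le_refl a
            | rel h => exact le_of_lt h
          have h2 : Lt (t ++ e :: (u₃ ++ [b])) (t ++ b :: []) :=
            lt_mid t (lt_of_le_of_lt hea hab) _ _
          simpa [List.append_assoc] using h2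
  apply lyndon_of_lt_suffix (by simp)
  intro s hs hsne hsnw
  rcases suffix_append_cases (y := [b]) hs with hsy | ⟨t, ht, htne, rfl⟩
  · obtain ⟨p, hp⟩ := hsy
    have hsb : s = [b] := by
      match p, hp with
      | [], hp => exact hp
      | f :: p', hp =>
        rw [List.cons_append] at hp
        injection hp with h1 h2
        rcases List.append_eq_nil_iff.mp h2 with ⟨_, h3⟩
        exact absurd h3 hsne
    subst hsb
    have hune : u ≠ [] := by rintro rfl; exact hsnw (by simp)
    simpa using core [] ⟨u, by simp⟩ (Ne.symm hune)
  · exact core t ht (by rintro rfl; exact hsnw rfl)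

theorem bordered_of_prefix_wpow {x y : List α} {m : ℕ} (hx : x ≠ [])
    (h : y <+: wpow x m) (hlen : x.length < y.length) : Bordered y := by
  match m with
  | 0 =>
    exfalso
    have h0 : y = [] := List.eq_nil_of_prefix_nil h
    subst h0
    simp at hlen
  | m + 1 =>
    have hxp : x <+: wpow x (m + 1) := by rw [wpow_succ]; exact List.prefix_append _ _
    have hxy : x <+: y := List.prefix_of_prefix_length_le hxp h (le_of_lt hlen)
    obtain ⟨t, rfl⟩ := hxy
    have htne : t ≠ [] := by rintro rfl; simp at hlen
    have ht1 : t <+: wpow x m := by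
      have h1 : x ++ t <+: x ++ wpow x m := by rw [← wpow_succ]; exact h
      exact (List.prefix_append_right_inj x).mp h1
    have ht2 : t <+: wpow x (m + 1) := ht1.trans (wpow_prefix x (Nat.le_succ m))
    have hty : t <+: x ++ t := by
      apply List.prefix_of_prefix_length_le ht2 h
      simp
    refine ⟨t, htne, hty, ?_, ⟨x, rfl⟩⟩
    intro he
    exact hx (List.self_eq_append_left.mp he)

end DuvalLyndon

/-- Duval's theorem: for a nonempty prenecklace w = (u a v')^k u with u a v' a
Lyndon word and k ≥ 1: wb is a prenecklace iff b ≥ a, and wb is Lyndon iff b > a. -/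
theorem stmt11 (u v' : List α) (a : α) (k : ℕ) (hk : 1 ≤ k)
    (hL : Lyndon (u ++ a :: v')) (w : List α) (hw : w = wpow (u ++ a :: v') k ++ u) :
    ∀ b : α, (Prenecklace (w ++ [b]) ↔ a ≤ b) ∧ (Lyndon (w ++ [b]) ↔ a < b) := by
  obtain ⟨k', rfl⟩ : ∃ k', k = k' + 1 := ⟨k - 1, by omega⟩
  set ℓ := u ++ a :: v' with hℓ
  have hwd : w = ℓ ++ (wpow ℓ k' ++ u) := by
    rw [hw, Nat.add_comm, wpow_add, wpow_one, List.append_assoc]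
  have hℓw : ℓ <+: w := by rw [hwd]; exact List.prefix_append _ _
  have hℓlen : ℓ.length ≤ w.length := hℓw.length_le
  have hℓpos : 0 < ℓ.length := by simp [hℓ]
  have hulen : u.length < ℓ.length := by simp [hℓ]
  have hwa : w ++ [a] <+: wpow ℓ (k' + 1 + 1) := by
    refine ⟨v', ?_⟩
    rw [wpow_add ℓ (k' + 1) 1, wpow_one, hw]
    simp [hℓ, List.append_assoc]
  have hw_pre : w <+: wpow ℓ (k' + 1 + 1) := (List.prefix_append w [a]).trans hwa
  -- Part 1: a < b implies Lyndon (w ++ [b])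
  have lynB : ∀ b : α, a < b → Lyndon (w ++ [b]) := by
    intro b hab
    have main : ∀ j : ℕ, Lyndon (wpow ℓ j ++ (u ++ [b])) := by
      intro j
      induction j with
      | zero => rw [wpow_zero]; simpa using lyndon_inc hL hab
      | succ j ih =>
        have hstep : wpow ℓ (j + 1) ++ (u ++ [b]) = ℓ ++ (wpow ℓ j ++ (u ++ [b])) := by
          rw [wpow_succ, List.append_assoc]
        rw [hstep]
        apply lyndon_append hL ih
        match j with
        | 0 => rw [wpow_zero]; simpa [hℓ] using lt_mid u hab v' ([] : List α)
        | j + 1 =>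
          apply lt_of_proper_prefix
            ⟨wpow ℓ j ++ (u ++ [b]), by simp [wpow_succ, List.append_assoc]⟩
          intro he
          have h0 := congrArg List.length he
          simp [wpow_length] at h0
          have h1 : ℓ.length ≤ (j + 1) * ℓ.length := Nat.le_mul_of_pos_left _ (by omega)
          omega
    have hmm := main (k' + 1)
    rwa [← List.append_assoc, ← hw] at hmm
  -- Part 2: b < a implies not Prenecklace (w ++ [b])
  have notB : ∀ b : α, b < a → ¬ Prenecklace (w ++ [b]) := by
    intro b hba hpre
    obtain ⟨v, ⟨x, m, hxL, rfl⟩, hpre⟩ := hpre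
    have hxne : x ≠ [] := hxL.1
    have hxpos : 0 < x.length := List.length_pos_iff.mpr hxne
    have hm : 1 ≤ m := by
      by_contra hm
      have hm0 : m = 0 := by omega
      subst hm0
      have h0 := hpre.length_le
      simp [wpow] at h0
    have hxp : x <+: wpow x m := by
      obtain ⟨m', rfl⟩ : ∃ m', m = m' + 1 := ⟨m - 1, by omega⟩
      rw [wpow_succ]; exact List.prefix_append _ _
    have hw_x : w <+: wpow x m := (List.prefix_append w [b]).trans hpre
    rcases lt_trichotomy x.length ℓ.length with hc | hc | hc
    · exact lyndon_unbordered hL (bordered_of_prefix_wpow hxne (hℓw.trans hw_x) hc)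
    · -- equal lengths: x = ℓ
      have hxl : x = ℓ :=
        (List.prefix_of_prefix_length_le hxp (hℓw.trans hw_x) (le_of_eq hc)).eq_of_length hc
      subst hxl
      have h1 : w ++ [b] <+: wpow ℓ (max m (k' + 1 + 1)) :=
        hpre.trans (wpow_prefix ℓ (le_max_left _ _))
      have h2 : w ++ [a] <+: wpow ℓ (max m (k' + 1 + 1)) :=
        hwa.trans (wpow_prefix ℓ (le_max_right _ _))
      have h3 : w ++ [b] = w ++ [a] :=
        (List.prefix_of_prefix_length_le h1 h2 (by simp)).eq_of_length (by simp)
      have h4 : b = a := by simpa using h3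
      exact absurd h4 (ne_of_lt hba)
    · rcases le_or_gt x.length w.length with hxw | hxw
      · -- |ℓ| < |x| ≤ |w| : x is bordered
        have hx_w : x <+: w := List.prefix_of_prefix_length_le hxp hw_x hxw
        exact lyndon_unbordered hxL
          (bordered_of_prefix_wpow (by simp [hℓ]) (hx_w.trans hw_pre) hc)
      · -- |w| < |x| : w ++ [b] <+: x
        have hwbx : w ++ [b] <+: x := by
          apply List.prefix_of_prefix_length_le hpre hxp
          simp; omega
        obtain ⟨z, hz⟩ := hwbx
        have hxe : x = (wpow ℓ k' ++ u) ++ a :: (v' ++ (u ++ b :: z)) := by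
          rw [← hz, hw, wpow_add ℓ k' 1, wpow_one]
          simp [hℓ, List.append_assoc]
        have hxs : x = ℓ ++ (wpow ℓ k' ++ (u ++ b :: z)) := by
          rw [← hz, hw, wpow_succ]
          simp [List.append_assoc]
        have hsne : wpow ℓ k' ++ (u ++ b :: z) ≠ [] := by simp
        have h1 : Lt x (wpow ℓ k' ++ (u ++ b :: z)) := by
          apply lyndon_lt_suffix hxL ⟨ℓ, hxs.symm⟩ hsne
          intro he
          rw [← he] at hxs
          have h0 : ℓ = [] := List.self_eq_append_left.mp hxs
          simp [hℓ] at h0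
        have hse : wpow ℓ k' ++ (u ++ b :: z) = (wpow ℓ k' ++ u) ++ b :: z := by
          simp [List.append_assoc]
        have h2 : Lt (wpow ℓ k' ++ (u ++ b :: z)) x := by
          rw [hse, hxe]; exact lt_mid _ hba z _
        exact llt_asymm h1 h2
  intro b
  constructor
  · constructor
    · intro hp
      by_contra hba
      exact notB b (not_le.mp hba) hp
    · intro hab
      rcases eq_or_lt_of_le hab with rfl | hab
      · exact ⟨wpow ℓ (k' + 1 + 1), ⟨ℓ, k' + 1 + 1, hL, rfl⟩, hwa⟩
      · exact ⟨w ++ [b], ⟨w ++ [b], 1, lynB b hab, (wpow_one _).symm⟩, List.prefix_rfl⟩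
  · constructor
    · intro hly
      have hpreb : Prenecklace (w ++ [b]) :=
        ⟨w ++ [b], ⟨w ++ [b], 1, hly, (wpow_one _).symm⟩, List.prefix_rfl⟩
      have hab : a ≤ b := by
        by_contra h
        exact notB b (not_le.mp h) hpreb
      rcases lt_or_eq_of_le hab with h | rfl
      · exact h
      · exfalso
        apply lyndon_unbordered hly
        refine ⟨u ++ [a], by simp, ?_, ?_,
          ⟨wpow ℓ (k' + 1), by rw [hw]; simp [List.append_assoc]⟩⟩
        · have h1 : u ++ [a] <+: ℓ := ⟨v', by simp [hℓ, List.append_assoc]⟩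
          exact h1.trans (hℓw.trans (List.prefix_append w [a]))
        · intro he
          have h0 : u = w := by simpa using he
          have h1 := congrArg List.length h0
          omega
    · exact lynB b
end

section
/- Let ℓ₁,…,ℓ_h be anti-Lyndon words with ℓ₁ ≥_p ℓ₂ ≥_p … ≥_p ℓ_h (each a prefix of the previous), h ≥ 2, and ℓ₁ = … = ℓ_i ≠ ℓ_{i+1}. If ℓ_{i+1}⋯ℓ_j is a prefix of ℓ₁⋯ℓ_i for some i < j ≤ h, then ℓ_{i+1}⋯ℓ_j is already a prefix of ℓ₁. -/
open List

variable {α : Type*} [LinearOrder α]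

section Aux
variable {α : Type*} [LinearOrder α]

private lemma lex_cancel_left (r : α → α → Prop) [IsIrrefl α r] :
    ∀ (b u v : List α), List.Lex r (b ++ u) (b ++ v) → List.Lex r u v := by
  intro b
  induction b with
  | nil => intro u v h; exact h
  | cons x b ih =>
    intro u v h
    cases h with
    | rel hr => exact absurd hr (irrefl x)
    | cons h => exact ih u v h

private lemma lex_cancel_right (r : α → α → Prop) :
    ∀ (u v b : List α), u.length = v.length → List.Lex r (u ++ b) (v ++ b) →
      List.Lex r u v ∨ u = v := by
  intro u
  induction u with
  | nil =>
    intro v b hl _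
    cases v with
    | nil => exact Or.inr rfl
    | cons c v => simp at hl
  | cons a u ih =>
    intro v b hl hlex
    cases v with
    | nil => simp at hl
    | cons c v =>
      simp only [List.length_cons, Nat.add_right_cancel_iff] at hl
      cases hlex with
      | rel hr => exact Or.inl (List.Lex.rel hr)
      | cons h =>
        rcases ih v b hl h with h' | h'
        · exact Or.inl (List.Lex.cons h')
        · exact Or.inr (by rw [h'])

private lemma antiLyndon_unbordered {w : List α} (hw : AntiLyndon w) : Unbordered w := by
  rintro ⟨b, hb, hpre, hne, hsuf⟩
  obtain ⟨v, hv⟩ := hpre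
  obtain ⟨u, hu⟩ := hsuf
  have hvne : v ≠ [] := by
    rintro rfl; exact hne (by simpa using hv)
  have hune : u ≠ [] := by
    rintro rfl; exact hne (by simpa using hu)
  have h1 : AntiLt w (v ++ b) := hw.2 b v hb hvne hv.symm
  have h2 : AntiLt w (b ++ u) := hw.2 u b hune hb hu.symm
  -- w = b ++ v = u ++ b
  have h3 : AntiLt v u := by
    have h2' : AntiLt (b ++ v) (b ++ u) := by rw [hv]; exact h2
    exact lex_cancel_left _ b v u h2'
  have hlen : u.length = v.length := by
    have : (u ++ b).length = (b ++ v).length := by rw [hu, hv]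
    simp only [List.length_append] at this
    omega
  have h4 : AntiLt (u ++ b) (v ++ b) := by rw [hu]; exact h1
  rcases lex_cancel_right _ u v b hlen h4 with h5 | h5
  · exact asymm (r := List.Lex (fun a b : α => b < a)) h3 h5
  · subst h5; exact asymm (r := List.Lex (fun a b : α => b < a)) h3 h3

/-- Key combinatorial lemma: if each block of `L` is a nonempty prefix of `A`,
and a nonempty proper suffix `s` of `A` is a prefix of `L.flatten`, then `A` is bordered. -/
private lemma bordered_of_suffix_prefix_join (A : List α) :
    ∀ L : List (List α), (∀ b ∈ L, b ≠ [] ∧ b <+: A) →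
    ∀ s : List α, s <:+ A → s ≠ [] → s.length < A.length → s <+: L.flatten → Bordered A := by
  intro L
  induction L with
  | nil =>
    intro _ s _ hsne _ hpre
    simp only [List.flatten_nil, List.prefix_nil] at hpre
    exact absurd hpre hsne
  | cons b L ih =>
    intro hblocks s hsuf hsne hslen hpre
    obtain ⟨hbne, hbpre⟩ := hblocks b (List.mem_cons_self)
    simp only [List.flatten_cons] at hpre
    rcases le_or_gt s.length b.length with hle | hlt
    · -- s is a prefix of b, hence of A: border
      have hsb : s <+: b := List.prefix_of_prefix_length_le hpre (List.prefix_append b L.flatten) hle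
      exact ⟨s, hsne, hsb.trans hbpre, fun h => by simp [h] at hslen, hsuf⟩
    · -- b is a prefix of s
      have hbs : b <+: s :=
        List.prefix_of_prefix_length_le (List.prefix_append b L.flatten) hpre (le_of_lt hlt)
      obtain ⟨s', rfl⟩ := hbs
      have hs' : s' <+: L.flatten := by
        rw [List.prefix_append_right_inj] at hpre; exact hpre
      have hs'suf : s' <:+ A := (List.suffix_append b s').trans hsuf
      rcases eq_or_ne s' [] with rfl | hs'ne
      · -- b itself is a suffix of A: border
        refine ⟨b, hbne, hbpre, fun h => ?_, by simpa using hsuf⟩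
        subst h
        simp at hslen
      · refine ih (fun x hx => hblocks x (List.mem_cons_of_mem _ hx)) s' hs'suf hs'ne ?_ hs'
        have : s'.length < (b ++ s').length := by
          simp [List.length_append, List.length_pos_iff.mpr hbne]
        omega

end Aux

/-- In a non-increasing prefix chain of anti-Lyndon words with ℓ₁ = ⋯ = ℓᵢ ≠ ℓᵢ₊₁,
if ℓᵢ₊₁⋯ℓⱼ is a prefix of ℓ₁⋯ℓᵢ then it is already a prefix of ℓ₁. -/
theorem stmt17 (ℓ : ℕ → List α) (h i j : ℕ) (hh : 2 ≤ h) (hi : 1 ≤ i) (hij : i < j)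
    (hjh : j ≤ h)
    (hanti : ∀ t, 1 ≤ t → t ≤ h → AntiLyndon (ℓ t))
    (hchain : ∀ t, 1 ≤ t → t < h → ℓ (t + 1) <+: ℓ t)
    (heq : ∀ t, 1 ≤ t → t ≤ i → ℓ t = ℓ 1) (hne : ℓ (i + 1) ≠ ℓ i)
    (hpre : cat ℓ (i + 1) j <+: cat ℓ 1 i) :
    cat ℓ (i + 1) j <+: ℓ 1 := by
  have hih : i < h := lt_of_lt_of_le hij hjh
  have hijh : i + 1 ≤ h := hih
  -- every ℓ t is a prefix of ℓ 1
  have hpref1 : ∀ t, 1 ≤ t → t ≤ h → ℓ t <+: ℓ 1 := by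
    intro t
    induction t with
    | zero => omega
    | succ n ih =>
      intro h1 h2
      rcases Nat.eq_zero_or_pos n with rfl | hn
      · exact List.prefix_refl _
      · exact (hchain n hn (by omega)).trans (ih hn (by omega))
  -- ℓ 1 is a prefix of cat ℓ 1 i
  have h11 : ℓ 1 <+: cat ℓ 1 i := by
    obtain ⟨i', rfl⟩ : ∃ i', i = i' + 1 := ⟨i - 1, by omega⟩
    have : i' + 1 + 1 - 1 = i' + 1 := by omega
    rw [cat, this, List.range'_succ]
    simp
  rcases List.prefix_or_prefix_of_prefix hpre h11 with hcase | hcase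
  · exact hcase
  · -- ℓ 1 is a prefix of cat ℓ (i+1) j : derive a border of ℓ 1, contradiction
    exfalso
    have hcat : cat ℓ (i + 1) j
        = ℓ (i + 1) ++ ((List.range' (i + 2) (j - i - 1)).map ℓ).flatten := by
      have h1 : j + 1 - (i + 1) = (j - i - 1) + 1 := by omega
      rw [cat, h1, List.range'_succ]
      simp only [List.map_cons, List.flatten_cons]
    have hl1i : ℓ i = ℓ 1 := heq i hi le_rfl
    have hb1 : ℓ (i + 1) <+: ℓ 1 := hl1i ▸ hchain i hi hih
    have hbne : ℓ (i + 1) ≠ ℓ 1 := fun hx => hne (hx.trans hl1i.symm)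
    obtain ⟨s, hs⟩ := hb1
    have hsne : s ≠ [] := by rintro rfl; exact hbne (by simpa using hs)
    have hssuf : s <:+ ℓ 1 := ⟨ℓ (i + 1), hs⟩
    have hbnonempty : ℓ (i + 1) ≠ [] := (hanti (i + 1) (by omega) hijh).1
    have hslen : s.length < (ℓ 1).length := by
      have := congrArg List.length hs
      simp only [List.length_append] at this
      have : 0 < (ℓ (i + 1)).length := List.length_pos_iff.mpr hbnonempty
      omega
    have hspre : s <+: ((List.range' (i + 2) (j - i - 1)).map ℓ).flatten := by
      have : ℓ (i + 1) ++ s <+: ℓ (i + 1) ++ ((List.range' (i + 2) (j - i - 1)).map ℓ).flatten := by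
        rw [hs, ← hcat]; exact hcase
      rwa [List.prefix_append_right_inj] at this
    have hblocks : ∀ b ∈ (List.range' (i + 2) (j - i - 1)).map ℓ, b ≠ [] ∧ b <+: ℓ 1 := by
      intro b hb
      obtain ⟨t, ht, rfl⟩ := List.mem_map.mp hb
      rw [List.mem_range'_1] at ht
      have ht1 : 1 ≤ t := by omega
      have ht2 : t ≤ h := by omega
      exact ⟨(hanti t ht1 ht2).1, hpref1 t ht1 ht2⟩
    exact antiLyndon_unbordered (hanti 1 le_rfl (by omega))
      (bordered_of_suffix_prefix_join (ℓ 1) _ hblocks s hssuf hsne hslen hspre)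
end
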